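/- Let ψ : {0,1}^r → {0,1} be a predicate and let M_ψ denote the set of minimal elements of ψ⁻¹(1) under the partial order β ⪯ β' iff supp(β) ⊆ supp(β'). Let (V,E) be a constraint hypergraph with each e ∈ E an r-tuple of distinct vertices, and let σ* : V → {0,1} be a labeling satisfying a γ-fraction of constraints, i.e., Pr_{e∼E}[ψ(σ*(e)) = 1] ≥ γ, where E is a nonempty finite multiset of constraints sampled uniformly. Then there exists a labeling σ : V → {0,1} with supp(σ) ⊆ supp(σ*) such that Pr_{e∼E}[σ(e) ∈ M_ψ] ≥ 2^{-r}·γ. -/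
import Mathlib


/-- β is a minimal accepting string of ψ under the support-containment order. -/
def IsMinimalAccept {r : ℕ} (ψ : (Fin r → Bool) → Bool) (β : Fin r → Bool) : Prop :=
  ψ β = true ∧ ∀ β' : Fin r → Bool, ψ β' = true → (∀ i, β' i = true → β i = true) → β' = β

instance {r : ℕ} (ψ : (Fin r → Bool) → Bool) : DecidablePred (IsMinimalAccept ψ) := fun β => by
  unfold IsMinimalAccept; infer_instance


lemma exists_minimal_accept {r : ℕ} (ψ : (Fin r → Bool) → Bool) :
    ∀ n (β0 : Fin r → Bool), (Finset.univ.filter (fun i => β0 i = true)).card ≤ n →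
      ψ β0 = true → ∃ β, IsMinimalAccept ψ β ∧ ∀ i, β i = true → β0 i = true := by
  intro n
  induction n with
  | zero =>
    intro β0 hcard h
    refine ⟨β0, ⟨h, ?_⟩, fun i hi => hi⟩
    intro β' hψ hle
    funext i
    have h0 : β0 i = false := by
      by_contra hc
      have hi : i ∈ Finset.univ.filter (fun i => β0 i = true) := by
        simp only [Bool.not_eq_false] at hc
        simp [hc]
      have := Finset.card_pos.mpr ⟨i, hi⟩
      omega
    have h1 : β' i = false := by
      by_contra hc
      simp only [Bool.not_eq_false] at hc
      rw [hle i hc] at h0; simp at h0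
    rw [h1, h0]
  | succ n ih =>
    intro β0 hcard h
    by_cases hmin : IsMinimalAccept ψ β0
    · exact ⟨β0, hmin, fun i hi => hi⟩
    · unfold IsMinimalAccept at hmin
      push_neg at hmin
      obtain ⟨β', hψ', hle', hne⟩ := hmin h
      have hsub : Finset.univ.filter (fun i => β' i = true) ⊂
          Finset.univ.filter (fun i => β0 i = true) := by
        rw [Finset.ssubset_def]
        constructor
        · intro i hi
          simp only [Finset.mem_filter, Finset.mem_univ, true_and] at hi ⊢
          exact hle' i hi
        · intro hsup
          apply hne
          funext i
          by_cases hb : β' i = true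
          · rw [hb, hle' i hb]
          · simp only [Bool.not_eq_true] at hb
            rw [hb]
            by_contra hc
            have hb0 : β0 i = true := by revert hc; cases β0 i <;> simp
            have hi : i ∈ Finset.univ.filter (fun i => β0 i = true) := by simp [hb0]
            have := hsup hi
            simp [hb] at this
      have hlt := Finset.card_lt_card hsub
      obtain ⟨β, hβ, hle⟩ := ih β' (by omega) hψ'
      exact ⟨β, hβ, fun i hi => hle' i (hle i hi)⟩

lemma card_filter_eq_sum_map {α : Type*} (E : Multiset α) (p : α → Prop) [DecidablePred p] :
    ((E.filter p).card : ℕ) = (E.map (fun e => if p e then 1 else 0)).sum := by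
  induction E using Multiset.induction with
  | empty => simp
  | cons a E ih => by_cases h : p a <;> simp [Multiset.filter_cons, h, ih] <;> omega

lemma sum_card_filter_swap {α β : Type*} (s : Finset α) (E : Multiset β)
    (p : α → β → Prop) [∀ a b, Decidable (p a b)] :
    ∑ a ∈ s, (E.filter (fun b => p a b)).card
      = (E.map (fun b => (s.filter (fun a => p a b)).card)).sum := by
  induction E using Multiset.induction with
  | empty => simp
  | cons b E ih =>
    have hstep : ∀ a, ((b ::ₘ E).filter (fun c => p a c)).card
        = (if p a b then 1 else 0) + (E.filter (fun c => p a c)).card := by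
      intro a; by_cases h : p a b <;> simp [Multiset.filter_cons, h] <;> omega
    simp only [hstep, Finset.sum_add_distrib, ih, Multiset.map_cons, Multiset.sum_cons]
    congr 1
    rw [Finset.card_filter]

lemma card_filter_ge {V : Type} [Fintype V] [DecidableEq V] {r : ℕ}
    (ψ : (Fin r → Bool) → Bool) (σs : V → Bool) (e : Fin r → V)
    (hinj : Function.Injective e) (hsat : ψ (fun i => σs (e i)) = true) :
    2 ^ ((Finset.univ.filter (fun v => σs v = true)).card - r) ≤
      (((Finset.univ.filter (fun σ : V → Bool => ∀ v, σ v = true → σs v = true))).filter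
        (fun σ => IsMinimalAccept ψ (fun i => σ (e i)))).card := by
  obtain ⟨β, hβmin, hβle⟩ := exists_minimal_accept ψ
    (Finset.univ.filter (fun i => (σs (e i)) = true)).card (fun i => σs (e i)) le_rfl hsat
  set T : Finset V := (Finset.univ.filter (fun v => σs v = true)) \ (Finset.univ.image e) with hT
  -- the injection
  set g : ({x // x ∈ T} → Bool) → (V → Bool) := fun τ v =>
    if h : ∃ i, e i = v then β h.choose
    else if hv : v ∈ T then τ ⟨v, hv⟩ else false with hg
  have hge : ∀ τ i, g τ (e i) = β i := by
    intro τ i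
    have h : ∃ j, e j = e i := ⟨i, rfl⟩
    have : g τ (e i) = β h.choose := by simp [hg, h]
    rw [this, hinj h.choose_spec]
  have hmem : ∀ τ, g τ ∈ ((Finset.univ.filter (fun σ : V → Bool => ∀ v, σ v = true → σs v = true))).filter
      (fun σ => IsMinimalAccept ψ (fun i => σ (e i))) := by
    intro τ
    rw [Finset.mem_filter, Finset.mem_filter]
    refine ⟨⟨Finset.mem_univ _, ?_⟩, ?_⟩
    · intro v hv
      rw [hg] at hv
      simp only at hv
      by_cases h : ∃ i, e i = v
      · rw [dif_pos h] at hv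
        rw [← h.choose_spec]
        exact hβle _ hv
      · rw [dif_neg h] at hv
        by_cases hvT : v ∈ T
        · have := hvT
          rw [hT, Finset.mem_sdiff, Finset.mem_filter] at this
          exact this.1.2
        · rw [dif_neg hvT] at hv; exact absurd hv (by simp)
    · have : (fun i => g τ (e i)) = β := funext (hge τ)
      rw [this]; exact hβmin
  have hinjg : Function.Injective g := by
    intro τ τ' h
    funext x
    obtain ⟨v, hv⟩ := x
    have hvT := hv
    rw [hT, Finset.mem_sdiff] at hvT
    have hne : ¬ ∃ i, e i = v := by
      intro ⟨i, hi⟩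
      exact hvT.2 (Finset.mem_image.mpr ⟨i, Finset.mem_univ _, hi⟩)
    have h1 : g τ v = τ ⟨v, hv⟩ := by simp [hg, hne, hv]
    have h2 : g τ' v = τ' ⟨v, hv⟩ := by simp [hg, hne, hv]
    rw [← h1, ← h2, h]
  have hcardT : (Finset.univ.filter (fun v => σs v = true)).card - r ≤ T.card := by
    have h1 := Finset.le_card_sdiff (Finset.univ.image e) (Finset.univ.filter (fun v => σs v = true))
    rw [← hT] at h1
    have h2 : (Finset.univ.image e).card ≤ r := by
      calc (Finset.univ.image e).card ≤ (Finset.univ : Finset (Fin r)).card := Finset.card_image_le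
      _ = r := by simp
    omega
  calc 2 ^ ((Finset.univ.filter (fun v => σs v = true)).card - r)
      ≤ 2 ^ T.card := Nat.pow_le_pow_right (by norm_num) hcardT
    _ = (Finset.univ : Finset ({x // x ∈ T} → Bool)).card := by
        rw [Finset.card_univ]; simp
    _ ≤ _ := Finset.card_le_card_of_injOn g (fun τ _ => hmem τ)
        (fun a _ b _ h => hinjg h)

/-- If σ* satisfies a γ-fraction of constraints of ψ, then there is a labeling σ supported
inside σ* that assigns a minimal accepting pattern to at least a 2^{-r}·γ fraction. -/
theorem exists_labeling_hitting_minimal {V : Type} [Fintype V] [DecidableEq V] {r : ℕ}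
    (ψ : (Fin r → Bool) → Bool) (E : Multiset (Fin r → V)) (hE : E ≠ 0)
    (hinj : ∀ e ∈ E, Function.Injective e)
    (σs : V → Bool) (γ : ℝ)
    (hsat : ((E.filter (fun e => ψ (fun i => σs (e i)) = true)).card : ℝ) / (E.card : ℝ) ≥ γ) :
    ∃ σ : V → Bool, (∀ v, σ v = true → σs v = true) ∧
      ((E.filter (fun e => IsMinimalAccept ψ (fun i => σ (e i)))).card : ℝ) / (E.card : ℝ)
        ≥ (2 : ℝ)⁻¹ ^ r * γ := by
  classical
  set n := (Finset.univ.filter (fun v => σs v = true)).card with hn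
  set S : Finset (V → Bool) :=
    Finset.univ.filter (fun σ : V → Bool => ∀ v, σ v = true → σs v = true) with hS
  have hSne : S.Nonempty := ⟨fun _ => false, by simp [hS]⟩
  set f : (V → Bool) → ℕ :=
    fun σ => (E.filter (fun e => IsMinimalAccept ψ (fun i => σ (e i)))).card with hf
  obtain ⟨σ, hσS, hmax⟩ := S.exists_max_image f hSne
  -- sum lower bound
  have key : 2 ^ (n - r) * (E.filter (fun e => ψ (fun i => σs (e i)) = true)).card
      ≤ ∑ τ ∈ S, f τ := by
    have hswap := sum_card_filter_swap S E
      (fun τ e => IsMinimalAccept ψ (fun i => τ (e i)))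
    have hind := card_filter_eq_sum_map E (fun e => ψ (fun i => σs (e i)) = true)
    rw [hf]
    rw [hswap, hind]
    rw [← Multiset.sum_map_mul_left]
    apply Multiset.sum_map_le_sum_map
    intro e he
    by_cases hs : ψ (fun i => σs (e i)) = true
    · simp only [hs, if_pos, mul_one]
      exact card_filter_ge ψ σs e (hinj e he) hs
    · simp [hs]
  -- S.card ≤ 2^n
  have hScard : S.card ≤ 2 ^ n := by
    have : S.card ≤ Fintype.card ({v // σs v = true} → Bool) := by
      apply Finset.card_le_card_of_injOn (fun σ => fun x : {v // σs v = true} => σ x.1)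
        (fun σ _ => Finset.mem_univ _)
      intro a ha b hb h
      rw [Finset.mem_coe, hS, Finset.mem_filter] at ha hb
      funext v
      by_cases hv : σs v = true
      · exact congrFun h ⟨v, hv⟩
      · have ha' : a v = false := by
          cases hav : a v
          · rfl
          · exact absurd (ha.2 v hav) hv
        have hb' : b v = false := by
          cases hbv : b v
          · rfl
          · exact absurd (hb.2 v hbv) hv
        rw [ha', hb']
    calc S.card ≤ Fintype.card ({v // σs v = true} → Bool) := this
      _ = 2 ^ n := by simp [hn, Fintype.card_subtype]
  have hsum_le : ∑ τ ∈ S, f τ ≤ S.card * f σ := by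
    calc ∑ τ ∈ S, f τ ≤ ∑ _τ ∈ S, f σ := Finset.sum_le_sum (fun τ hτ => hmax τ hτ)
      _ = S.card * f σ := by rw [Finset.sum_const, smul_eq_mul]
  have hnat : 2 ^ (n - r) * (E.filter (fun e => ψ (fun i => σs (e i)) = true)).card
      ≤ 2 ^ n * f σ :=
    le_trans key (le_trans hsum_le (Nat.mul_le_mul_right _ hScard))
  -- move to reals
  have hEc : (0:ℝ) < (E.card : ℝ) := by
    have : E.card ≠ 0 := fun h => hE (Multiset.card_eq_zero.mp h)
    positivity
  set sat : ℝ := ((E.filter (fun e => ψ (fun i => σs (e i)) = true)).card : ℝ) with hsatdef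
  have hsat0 : (0:ℝ) ≤ sat := by positivity
  have hreal : (2:ℝ) ^ (n - r) * sat ≤ 2 ^ n * (f σ : ℝ) := by
    rw [hsatdef]; exact_mod_cast hnat
  have hpow : (2:ℝ) ^ n * (2:ℝ)⁻¹ ^ r ≤ 2 ^ (n - r) := by
    rcases le_or_gt r n with h | h
    · have heq : (2:ℝ) ^ n * (2:ℝ)⁻¹ ^ r = 2 ^ (n - r) := by
        rw [inv_pow, ← div_eq_mul_inv, div_eq_iff (by positivity), ← pow_add,
          Nat.sub_add_cancel h]
      exact le_of_eq heq
    · have h1 : n - r = 0 := Nat.sub_eq_zero_of_le h.le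
      rw [h1, pow_zero]
      have : (2:ℝ) ^ n * (2:ℝ)⁻¹ ^ r = 2 ^ n / 2 ^ r := by
        rw [inv_pow, div_eq_mul_inv]
      rw [this, div_le_one (by positivity)]
      exact pow_le_pow_right₀ (by norm_num) h.le
  have hfin : (2:ℝ)⁻¹ ^ r * sat ≤ (f σ : ℝ) := by
    have h1 : (2:ℝ) ^ n * ((2:ℝ)⁻¹ ^ r * sat) ≤ 2 ^ n * (f σ : ℝ) := by
      calc (2:ℝ) ^ n * ((2:ℝ)⁻¹ ^ r * sat) = ((2:ℝ) ^ n * (2:ℝ)⁻¹ ^ r) * sat := by ring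
        _ ≤ 2 ^ (n - r) * sat := mul_le_mul_of_nonneg_right hpow hsat0
        _ ≤ 2 ^ n * (f σ : ℝ) := hreal
    exact le_of_mul_le_mul_left h1 (by positivity)
  refine ⟨σ, ?_, ?_⟩
  · have := hσS
    rw [hS, Finset.mem_filter] at this
    exact this.2
  · have h2 : (2:ℝ)⁻¹ ^ r * γ ≤ (2:ℝ)⁻¹ ^ r * (sat / E.card) :=
      mul_le_mul_of_nonneg_left hsat (by positivity)
    rw [ge_iff_le]
    calc (2:ℝ)⁻¹ ^ r * γ ≤ (2:ℝ)⁻¹ ^ r * (sat / E.card) := h2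
      _ = ((2:ℝ)⁻¹ ^ r * sat) / E.card := by ring
      _ ≤ (f σ : ℝ) / E.card := by gcongr
      _ = _ := rfl
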